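/- Every odd diagram class in S_n is an antichain in the right weak order: if u ≠ v have D_o(u) = D_o(v), then u and v are incomparable in right weak order. -/

import Mathlib

def oddDiagram {n : ℕ} (w : Equiv.Perm (Fin n)) : Finset (Fin n × Fin n) :=
  Finset.univ.filter (fun p => (p.2 : ℕ) < (w p.1 : ℕ) ∧ (p.1 : ℕ) < (w.symm p.2 : ℕ) ∧
    (p.1 : ℕ) % 2 ≠ (w.symm p.2 : ℕ) % 2)

def invLength {n : ℕ} (w : Equiv.Perm (Fin n)) : ℕ :=
  (Finset.univ.filter (fun p : Fin n × Fin n => p.1 < p.2 ∧ w p.2 < w p.1)).card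

def bruhatLE {n : ℕ} : Equiv.Perm (Fin n) → Equiv.Perm (Fin n) → Prop :=
  Relation.ReflTransGen (fun u v => ∃ t : Equiv.Perm (Fin n), t.IsSwap ∧ v = u * t ∧ invLength u < invLength v)

def contains213 {n : ℕ} (w : Equiv.Perm (Fin n)) : Prop :=
  ∃ i h j : Fin n, i < h ∧ h < j ∧ w h < w i ∧ w i < w j

def contains312 {n : ℕ} (w : Equiv.Perm (Fin n)) : Prop :=
  ∃ i h j : Fin n, i < h ∧ h < j ∧ w h < w j ∧ w j < w i

def rightWeakLE {n : ℕ} : Equiv.Perm (Fin n) → Equiv.Perm (Fin n) → Prop :=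
  Relation.ReflTransGen (fun u v => ∃ (i : Fin n) (h : (i : ℕ) + 1 < n),
    v = u * Equiv.swap i ⟨(i : ℕ) + 1, h⟩ ∧ invLength u < invLength v)

/-!
Right weak order refines containment of left inversion sets (pairs of values `a < b` with `b`
to the left of `a`): a cover `u ◁ u * s_i` only adds the pair `(u i, u (i + 1))`. So it suffices
to show that `leftInversions u ⊆ leftInversions v` and `D_o(u) = D_o(v)` force `u = v`, i.e.
`u⁻¹ c = v⁻¹ c` for every value `c`, by strong induction on `c`.

If `u⁻¹ c < v⁻¹ c`, every position in `[u⁻¹ c, v⁻¹ c)` carries in `v` a value larger than `c`;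
one of `u⁻¹ c`, `u⁻¹ c + 1` has parity different from `v⁻¹ c`, giving a cell in column `c` of
`D_o(v)` that is not in `D_o(u)`. If `v⁻¹ c < u⁻¹ c`, then `v⁻¹ ∘ u` maps the positions left
of `u⁻¹ c` into themselves, hence onto them, so one of them holds `c` in `u`: absurd.
-/

open Equiv Finset

theorem swap_lt_swap_of_covBy {α : Type*} [LinearOrder α] {i j a b : α} (hij : i ⋖ j)
    (hab : a < b) (hne : ¬(a = i ∧ b = j)) : swap i j a < swap i j b := by
  have hlt := hij.lt
  have hle : ∀ c, c < j → c ≤ i := fun _ => hij.le_of_lt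
  have hge : ∀ c, i < c → j ≤ c := fun _ => hij.ge_of_gt
  simp only [swap_apply_def]
  split_ifs <;> grind

theorem Fin.covBy_mk_add_one {n : ℕ} (i : Fin n) (h : (i : ℕ) + 1 < n) : i ⋖ ⟨i + 1, h⟩ :=
  Fin.covBy_iff.2 (Nat.covBy_iff_add_one_eq.2 rfl)

theorem lt_of_invLength_lt_mul_swap {n : ℕ} {u : Perm (Fin n)} {i j : Fin n} (hij : i ⋖ j)
    (hlen : invLength u < invLength (u * swap i j)) : u i < u j := by
  by_contra! hji
  refine hlen.not_ge (card_le_card_of_injOn (Prod.map (swap i j) (swap i j)) ?_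
    ((swap i j).injective.prodMap (swap i j).injective).injOn)
  intro p hp
  simp only [mem_coe, mem_filter, mem_univ, true_and] at hp ⊢
  simp only [Perm.mul_apply, Prod.map_fst, Prod.map_snd] at hp ⊢
  refine ⟨swap_lt_swap_of_covBy hij hp.1 ?_, hp.2⟩
  rintro ⟨h1, h2⟩
  rw [h1, h2, swap_apply_left, swap_apply_right] at hp
  exact hp.2.not_ge hji

def leftInversions {n : ℕ} (w : Perm (Fin n)) : Set (Fin n × Fin n) :=
  {p | p.1 < p.2 ∧ w.symm p.2 < w.symm p.1}

theorem leftInversions_subset_mul_swap {n : ℕ} {u : Perm (Fin n)} {i j : Fin n} (hij : i ⋖ j)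
    (hlt : u i < u j) : leftInversions u ⊆ leftInversions (u * swap i j) := by
  rintro ⟨a, b⟩ ⟨hab, hba⟩
  refine ⟨hab, ?_⟩
  simp only [Perm.mul_def, symm_trans_apply, symm_swap]
  refine swap_lt_swap_of_covBy hij hba ?_
  rintro ⟨hb, ha⟩
  rw [← hb, ← ha, apply_symm_apply, apply_symm_apply] at hlt
  exact hlt.not_gt hab

theorem leftInversions_subset_of_rightWeakLE {n : ℕ} {u v : Perm (Fin n)} (h : rightWeakLE u v) :
    leftInversions u ⊆ leftInversions v := by
  induction h with
  | refl => exact subset_rfl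
  | tail _ hstep ih =>
    obtain ⟨i, hi, rfl, hlen⟩ := hstep
    have hcov := Fin.covBy_mk_add_one i hi
    exact ih.trans (leftInversions_subset_mul_swap hcov (lt_of_invLength_lt_mul_swap hcov hlen))

theorem mem_oddDiagram {n : ℕ} {w : Perm (Fin n)} {p c : Fin n} :
    (p, c) ∈ oddDiagram w ↔ c < w p ∧ p < w.symm c ∧ (p : ℕ) % 2 ≠ (w.symm c : ℕ) % 2 := by
  simp only [oddDiagram, mem_filter, mem_univ, true_and, Fin.lt_def]

section InductionStep

variable {n : ℕ} {u v : Perm (Fin n)} {c : Fin n}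

theorem lt_apply_of_symm_le_of_lt_symm (hI : leftInversions u ⊆ leftInversions v)
    (hagree : ∀ d < c, u.symm d = v.symm d) {p : Fin n} (hqp : u.symm c ≤ p)
    (hpq : p < v.symm c) : c < v p := by
  rcases lt_trichotomy (v p) c with hlt | heq | hgt
  · have hup : u p = v p := by
      have h := hagree _ hlt
      rw [symm_apply_apply] at h
      exact (u.symm_apply_eq.1 h).symm
    have hqp' : u.symm c < p := hqp.lt_of_ne <| by
      rintro rfl
      rw [apply_symm_apply] at hup
      exact hlt.ne hup.symm
    have hinv := (hI (show (v p, c) ∈ leftInversions u from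
      ⟨hlt, by rwa [← hup, symm_apply_apply]⟩)).2
    rw [symm_apply_apply] at hinv
    exact absurd hpq hinv.not_gt
  · rw [← heq, symm_apply_apply] at hpq
    exact absurd hpq (lt_irrefl p)
  · exact hgt

theorem not_symm_lt_symm_of_oddDiagram_eq (hI : leftInversions u ⊆ leftInversions v)
    (hagree : ∀ d < c, u.symm d = v.symm d) (hD : oddDiagram u = oddDiagram v) :
    ¬ u.symm c < v.symm c := by
  intro hlt
  obtain ⟨p, hqp, hpq, hpar⟩ : ∃ p, u.symm c ≤ p ∧ p < v.symm c ∧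
      (p : ℕ) % 2 ≠ (v.symm c : ℕ) % 2 := by
    by_cases hpar : (u.symm c : ℕ) % 2 = (v.symm c : ℕ) % 2
    · rw [Fin.lt_def] at hlt
      exact ⟨⟨u.symm c + 1, by omega⟩, by simp [Fin.le_def], by simp [Fin.lt_def]; omega,
        by simp; omega⟩
    · exact ⟨_, le_rfl, hlt, hpar⟩
  have hmem : (p, c) ∈ oddDiagram v :=
    mem_oddDiagram.2 ⟨lt_apply_of_symm_le_of_lt_symm hI hagree hqp hpq, hpq, hpar⟩
  rw [← hD, mem_oddDiagram] at hmem
  exact hmem.2.1.not_ge hqp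

theorem not_symm_lt_symm_of_leftInversions_subset (hI : leftInversions u ⊆ leftInversions v)
    (hagree : ∀ d < c, u.symm d = v.symm d) : ¬ v.symm c < u.symm c := by
  intro hlt
  have hmaps : Set.MapsTo (fun p => v.symm (u p)) (Iio (u.symm c)) (Iio (u.symm c)) := by
    intro p hp
    simp only [coe_Iio, Set.mem_Iio] at hp ⊢
    rcases lt_trichotomy (u p) c with hpc | rfl | hpc
    · rwa [← hagree _ hpc, symm_apply_apply]
    · simp at hp
    · exact (hI (show (c, u p) ∈ leftInversions u from
        ⟨hpc, by rwa [symm_apply_apply]⟩)).2.trans hlt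
  obtain ⟨p, hp, hpc⟩ := surjOn_of_injOn_of_card_le _ hmaps
    (v.symm.injective.comp u.injective).injOn le_rfl (show v.symm c ∈ Iio (u.symm c) by simpa)
  simp only [EmbeddingLike.apply_eq_iff_eq] at hpc
  subst hpc
  simp at hp

end InductionStep

theorem eq_of_leftInversions_subset_of_oddDiagram_eq {n : ℕ} {u v : Perm (Fin n)}
    (hI : leftInversions u ⊆ leftInversions v) (hD : oddDiagram u = oddDiagram v) : u = v := by
  suffices h : ∀ c, u.symm c = v.symm c from symm_bijective.injective (Equiv.ext h)
  intro c
  induction c using WellFoundedLT.induction with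
  | _ c hagree =>
    exact le_antisymm (not_lt.1 (not_symm_lt_symm_of_leftInversions_subset hI hagree))
      (not_lt.1 (not_symm_lt_symm_of_oddDiagram_eq hI hagree hD))

theorem stmt17 {n : ℕ} (u v : Equiv.Perm (Fin n)) (hne : u ≠ v)
    (h : oddDiagram u = oddDiagram v) :
    ¬ rightWeakLE u v ∧ ¬ rightWeakLE v u :=
  ⟨fun huv => hne (eq_of_leftInversions_subset_of_oddDiagram_eq
      (leftInversions_subset_of_rightWeakLE huv) h),
    fun hvu => hne (eq_of_leftInversions_subset_of_oddDiagram_eq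
      (leftInversions_subset_of_rightWeakLE hvu) h.symm).symm⟩
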